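/- P is a pseudo-triangular basis of fuzzy sets if and only if P is a 2-overlapping Ruspini partition and each f_i ∈ P is strongly normal, min-convex, and strictly min-convex on its support. -/

import Mathlib

/-!
Sort the functions by the points where they reach `1`. In a pseudo-triangular basis only `f_i`
and `f_{i+1}` live on `[t_i, t_{i+1}]`, where `f_i` is a continuous bijection onto `[0, 1]`
falling from `1` to `0`, hence strictly decreasing, and `f_{i+1} = 1 - f_i`. So the family sums
to `1`, at most two functions overlap, and each `f_m` increases strictly up to `t_m` and
decreases strictly after it wherever it is positive; this unimodality gives strong normality
and (strict) min-convexity.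

Conversely, in a Ruspini partition every other function vanishes where `f_i` equals `1`, so the
peaks are distinct; sorted, they are the nodes `t`. Min-convexity makes `f_m` vanish beyond the
neighbouring peaks, so on `[t_i, t_{i+1}]` only `f_i` and `f_{i+1}` survive and they sum to `1`,
while at `0` and `1` only the first and the last function survive, which therefore peak there.
Strict min-convexity on the support makes `f_i` strictly decreasing on `[t_i, t_{i+1}]`, and the
intermediate value theorem makes it onto `[0, 1]`.
-/

open Set

section Partitions

variable {ι : Type*}

def IsRuspini [Fintype ι] (f : ι → ℝ → ℝ) : Prop :=
  ∀ x ∈ Icc (0:ℝ) 1, ∑ i, f i x = 1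

def IsTwoOverlapping (f : ι → ℝ → ℝ) : Prop :=
  ∀ x ∈ Icc (0:ℝ) 1, ∀ i₁ i₂ i₃ : ι,
    i₁ ≠ i₂ → i₁ ≠ i₃ → i₂ ≠ i₃ → min (f i₁ x) (min (f i₂ x) (f i₃ x)) = 0

theorem isRuspini_comp_perm [Fintype ι] (f : ι → ℝ → ℝ) (σ : Equiv.Perm ι) :
    IsRuspini (f ∘ σ) ↔ IsRuspini f := by
  simp only [IsRuspini, Function.comp_apply]
  exact forall₂_congr fun x _ => by rw [Equiv.sum_comp σ fun i => f i x]

theorem IsRuspini.eq_zero_of_eq_one [Fintype ι] {f : ι → ℝ → ℝ} (hsum : IsRuspini f)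
    (hnn : ∀ i, ∀ x ∈ Icc (0:ℝ) 1, 0 ≤ f i x) {x : ℝ} (hx : x ∈ Icc (0:ℝ) 1)
    {i j : ι} (hi : f i x = 1) (hji : j ≠ i) : f j x = 0 := by
  classical
  have hpair : ∑ k ∈ {i, j}, f k x ≤ ∑ k, f k x :=
    Finset.sum_le_sum_of_subset_of_nonneg (Finset.subset_univ _) fun k _ _ => hnn k x hx
  rw [Finset.sum_pair hji.symm, hsum x hx, hi] at hpair
  linarith [hnn j x hx]

theorem IsRuspini.eq_one_of_forall_ne_eq_zero [Fintype ι] {f : ι → ℝ → ℝ}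
    (hsum : IsRuspini f) {x : ℝ} (hx : x ∈ Icc (0:ℝ) 1) {i : ι}
    (h : ∀ j, j ≠ i → f j x = 0) : f i x = 1 := by
  rw [← hsum x hx, Finset.sum_eq_single i (fun j _ hj => h j hj) (by simp)]

theorem isTwoOverlapping_of_forall_exists_pair {f : ι → ℝ → ℝ}
    (hnn : ∀ i, ∀ x ∈ Icc (0:ℝ) 1, 0 ≤ f i x)
    (h : ∀ x ∈ Icc (0:ℝ) 1, ∃ a b : ι, ∀ i, f i x ≠ 0 → i = a ∨ i = b) :
    IsTwoOverlapping f := by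
  intro x hx i₁ i₂ i₃ h₁₂ h₁₃ h₂₃
  obtain ⟨a, b, hab⟩ := h x hx
  have hzero : f i₁ x = 0 ∨ f i₂ x = 0 ∨ f i₃ x = 0 := by
    by_contra! hne
    rcases hab i₁ hne.1 with rfl | rfl <;> rcases hab i₂ hne.2.1 with rfl | rfl <;>
      rcases hab i₃ hne.2.2 with rfl | rfl <;> contradiction
  refine le_antisymm ?_ (le_min (hnn _ x hx) (le_min (hnn _ x hx) (hnn _ x hx)))
  rcases hzero with h0 | h0 | h0 <;> simp [h0]

theorem IsTwoOverlapping.of_comp_perm {f : ι → ℝ → ℝ} {σ : Equiv.Perm ι}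
    (h : IsTwoOverlapping (f ∘ σ)) : IsTwoOverlapping f := by
  intro x hx i₁ i₂ i₃ h₁₂ h₁₃ h₂₃
  simpa using h x hx (σ.symm i₁) (σ.symm i₂) (σ.symm i₃) (by simpa) (by simpa) (by simpa)

end Partitions

def IsStronglyNormal (g : ℝ → ℝ) : Prop :=
  ∃! x, x ∈ Icc (0:ℝ) 1 ∧ g x = 1

def IsMinConvex (g : ℝ → ℝ) : Prop :=
  ∀ x ∈ Icc (0:ℝ) 1, ∀ y ∈ Icc (0:ℝ) 1, ∀ l ∈ Icc (0:ℝ) 1,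
    min (g x) (g y) ≤ g (l * x + (1 - l) * y)

def IsStrictMinConvexOnSupport (g : ℝ → ℝ) : Prop :=
  ∀ x y : ℝ, x < y → Icc x y ⊆ {z | z ∈ Icc (0:ℝ) 1 ∧ 0 < g z} →
    ∀ l : ℝ, 0 < l → l < 1 → min (g x) (g y) < g (l * x + (1 - l) * y)

section Segments

variable {x y l : ℝ}

theorem combo_mem_uIcc (hl : l ∈ Icc (0:ℝ) 1) : l * x + (1 - l) * y ∈ uIcc x y := by
  rw [← segment_eq_uIcc]
  exact ⟨l, 1 - l, hl.1, sub_nonneg.2 hl.2, by ring, rfl⟩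

theorem combo_mem_Ioo (hxy : x < y) (hl₀ : 0 < l) (hl₁ : l < 1) :
    l * x + (1 - l) * y ∈ Ioo x y := by
  rw [← openSegment_eq_Ioo hxy]
  exact ⟨l, 1 - l, hl₀, sub_pos.2 hl₁, by ring, rfl⟩

theorem exists_combo_eq_of_mem_Icc {z : ℝ} (hz : z ∈ Icc x y) :
    ∃ l ∈ Icc (0:ℝ) 1, l * x + (1 - l) * y = z := by
  rw [← segment_eq_Icc (hz.1.trans hz.2)] at hz
  obtain ⟨l, m, hl, hm, hlm, rfl⟩ := hz
  obtain rfl : m = 1 - l := by linarith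
  exact ⟨l, ⟨hl, by linarith⟩, rfl⟩

theorem exists_combo_eq_of_mem_Ioo {z : ℝ} (hz : z ∈ Ioo x y) :
    ∃ l ∈ Ioo (0:ℝ) 1, l * x + (1 - l) * y = z := by
  rw [← openSegment_eq_Ioo (hz.1.trans hz.2)] at hz
  obtain ⟨l, m, hl, hm, hlm, rfl⟩ := hz
  obtain rfl : m = 1 - l := by linarith
  exact ⟨l, ⟨hl, by linarith⟩, rfl⟩

end Segments

section MinConvex

variable {g : ℝ → ℝ} {a b c : ℝ}

theorem IsMinConvex.min_le (h : IsMinConvex g) (ha : a ∈ Icc (0:ℝ) 1)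
    (hc : c ∈ Icc (0:ℝ) 1) (hb : b ∈ uIcc a c) : min (g a) (g c) ≤ g b := by
  rcases le_total a c with hac | hca
  · obtain ⟨l, hl, rfl⟩ := exists_combo_eq_of_mem_Icc (uIcc_of_le hac ▸ hb)
    exact h a ha c hc l hl
  · obtain ⟨l, hl, rfl⟩ := exists_combo_eq_of_mem_Icc (uIcc_of_ge hca ▸ hb)
    exact min_comm (g a) (g c) ▸ h c hc a ha l hl

theorem isMinConvex_of_min_le
    (h : ∀ a ∈ Icc (0:ℝ) 1, ∀ c ∈ Icc (0:ℝ) 1, ∀ b ∈ Icc a c, min (g a) (g c) ≤ g b) :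
    IsMinConvex g := by
  intro x hx y hy l hl
  rcases mem_uIcc.1 (combo_mem_uIcc hl (x := x) (y := y)) with hz | hz
  · exact h x hx y hy _ hz
  · exact min_comm (g x) (g y) ▸ h y hy x hx _ hz

theorem IsStrictMinConvexOnSupport.min_lt (h : IsStrictMinConvexOnSupport g)
    (hsupp : Icc a c ⊆ {z | z ∈ Icc (0:ℝ) 1 ∧ 0 < g z}) (hb : b ∈ Ioo a c) :
    min (g a) (g c) < g b := by
  obtain ⟨l, hl, rfl⟩ := exists_combo_eq_of_mem_Ioo hb
  exact h a c (hb.1.trans hb.2) hsupp l hl.1 hl.2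

theorem isStrictMinConvexOnSupport_of_min_lt
    (h : ∀ a c : ℝ, Icc a c ⊆ {z | z ∈ Icc (0:ℝ) 1 ∧ 0 < g z} →
      ∀ b ∈ Ioo a c, min (g a) (g c) < g b) :
    IsStrictMinConvexOnSupport g :=
  fun x y hxy hsupp _ hl₀ hl₁ => h x y hsupp _ (combo_mem_Ioo hxy hl₀ hl₁)

end MinConvex

def IsStrictlyUnimodalOnSupport (g : ℝ → ℝ) (p : ℝ) : Prop :=
  (∀ x ∈ Icc (0:ℝ) 1, ∀ y, x < y → y ≤ p → 0 < g x → g x < g y) ∧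
  (∀ y ∈ Icc (0:ℝ) 1, ∀ x, p ≤ x → x < y → 0 < g y → g y < g x)

namespace IsStrictlyUnimodalOnSupport

variable {g : ℝ → ℝ} {p : ℝ}

theorem isMinConvex (h : IsStrictlyUnimodalOnSupport g p)
    (hnn : ∀ x ∈ Icc (0:ℝ) 1, 0 ≤ g x) : IsMinConvex g := by
  refine isMinConvex_of_min_le fun a ha c hc b ⟨hab, hbc⟩ => ?_
  have hb : b ∈ Icc (0:ℝ) 1 := ⟨ha.1.trans hab, hbc.trans hc.2⟩
  rcases le_total b p with hbp | hpb
  · refine (min_le_left _ _).trans ?_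
    rcases hab.eq_or_lt with rfl | hab
    · rfl
    rcases (hnn a ha).eq_or_lt with h0 | h0
    · exact h0 ▸ hnn b hb
    · exact (h.1 a ha b hab hbp h0).le
  · refine (min_le_right _ _).trans ?_
    rcases hbc.eq_or_lt with rfl | hbc
    · rfl
    rcases (hnn c hc).eq_or_lt with h0 | h0
    · exact h0 ▸ hnn b hb
    · exact (h.2 c hc b hpb hbc h0).le

theorem isStrictMinConvexOnSupport (h : IsStrictlyUnimodalOnSupport g p) :
    IsStrictMinConvexOnSupport g := by
  refine isStrictMinConvexOnSupport_of_min_lt fun a c hsupp b ⟨hab, hbc⟩ => ?_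
  have ha := hsupp (left_mem_Icc.2 (hab.trans hbc).le)
  have hc := hsupp (right_mem_Icc.2 (hab.trans hbc).le)
  rcases le_total b p with hbp | hpb
  · exact (min_le_left _ _).trans_lt (h.1 a ha.1 b hab hbp ha.2)
  · exact (min_le_right _ _).trans_lt (h.2 c hc.1 b hpb hbc hc.2)

theorem isStronglyNormal (h : IsStrictlyUnimodalOnSupport g p) (hp : p ∈ Icc (0:ℝ) 1)
    (hgp : g p = 1) : IsStronglyNormal g := by
  refine ⟨p, ⟨hp, hgp⟩, fun x ⟨hx, hgx⟩ => ?_⟩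
  rcases lt_trichotomy x p with hxp | rfl | hpx
  · linarith [h.1 x hx p hxp le_rfl (hgx ▸ one_pos)]
  · rfl
  · linarith [h.2 x hx p le_rfl hpx (hgx ▸ one_pos)]

end IsStrictlyUnimodalOnSupport

theorem fin_lt_mk_add_one {n : ℕ} (k : Fin n) (hk : (k : ℕ) + 1 < n) :
    k < ⟨(k : ℕ) + 1, hk⟩ :=
  Fin.lt_def.2 (Nat.lt_add_one _)

theorem exists_mem_Icc_succ {n : ℕ} (hn : 2 ≤ n) {t : Fin n → ℝ} {x : ℝ}
    (h₀ : t ⟨0, Nat.zero_lt_of_lt hn⟩ ≤ x) (h₁ : x ≤ t ⟨n - 1, Nat.sub_one_lt_of_lt hn⟩) :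
    ∃ k : Fin n, ∃ hk : (k : ℕ) + 1 < n, x ∈ Icc (t k) (t ⟨(k : ℕ) + 1, hk⟩) := by
  classical
  have hex : ∃ k, ∃ hk : k + 1 < n, x ≤ t ⟨k + 1, hk⟩ :=
    ⟨n - 2, by omega, by simpa [show n - 2 + 1 = n - 1 by omega] using h₁⟩
  obtain ⟨hk, hxk⟩ := Nat.find_spec hex
  refine ⟨⟨Nat.find hex, by omega⟩, hk, ?_, hxk⟩
  by_cases h0 : Nat.find hex = 0
  · simpa [h0] using h₀
  · have hmin := Nat.find_min hex (Nat.sub_one_lt h0)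
    simp only [not_exists, not_le] at hmin
    simpa [Nat.sub_one_add_one h0] using (hmin (by omega)).le

/-- The nodes `t_1 < ⋯ < t_n` of the paper are `t 0 < ⋯ < t (n - 1)`, and `g` is the family
already permuted into the order of its nodes. -/
def IsPseudoTriangular {n : ℕ} (hn : 2 ≤ n) (g : Fin n → ℝ → ℝ) (t : Fin n → ℝ) : Prop :=
  StrictMono t ∧ t ⟨0, Nat.zero_lt_of_lt hn⟩ = 0 ∧ t ⟨n - 1, Nat.sub_one_lt_of_lt hn⟩ = 1 ∧
    ∀ i : Fin n, ∀ hi : (i : ℕ) + 1 < n,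
      (g i (t i) = 1 ∧ g i (t ⟨(i : ℕ) + 1, hi⟩) = 0) ∧
      (∀ j : Fin n, j ≠ i → j ≠ ⟨(i : ℕ) + 1, hi⟩ →
        ∀ x ∈ Icc (t i) (t ⟨(i : ℕ) + 1, hi⟩), g j x = 0) ∧
      (∀ x ∈ Icc (t i) (t ⟨(i : ℕ) + 1, hi⟩), g ⟨(i : ℕ) + 1, hi⟩ x = 1 - g i x) ∧
      (BijOn (g i) (Icc (t i) (t ⟨(i : ℕ) + 1, hi⟩)) (Icc 0 1) ∧
       BijOn (g ⟨(i : ℕ) + 1, hi⟩) (Icc (t i) (t ⟨(i : ℕ) + 1, hi⟩)) (Icc 0 1))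

namespace IsPseudoTriangular

variable {n : ℕ} {hn : 2 ≤ n} {g : Fin n → ℝ → ℝ} {t : Fin n → ℝ}

theorem mem_Icc (h : IsPseudoTriangular hn g t) (m : Fin n) : t m ∈ Icc (0:ℝ) 1 := by
  obtain ⟨ht, h₀, h₁, -⟩ := h
  exact ⟨h₀ ▸ ht.monotone (Fin.le_iff_val_le_val.2 (Nat.zero_le _)),
    h₁ ▸ ht.monotone (Fin.le_iff_val_le_val.2 (Nat.le_sub_one_of_lt m.isLt))⟩

theorem exists_mem_step (h : IsPseudoTriangular hn g t) {x : ℝ} (hx : x ∈ Icc (0:ℝ) 1) :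
    ∃ k : Fin n, ∃ hk : (k : ℕ) + 1 < n, x ∈ Icc (t k) (t ⟨(k : ℕ) + 1, hk⟩) :=
  exists_mem_Icc_succ hn (by rw [h.2.1]; exact hx.1) (by rw [h.2.2.1]; exact hx.2)

theorem eq_or_eq_of_ne_zero (h : IsPseudoTriangular hn g t) {k : Fin n}
    {hk : (k : ℕ) + 1 < n} {x : ℝ} (hx : x ∈ Icc (t k) (t ⟨(k : ℕ) + 1, hk⟩)) {m : Fin n}
    (hm : g m x ≠ 0) : m = k ∨ m = ⟨(k : ℕ) + 1, hk⟩ := by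
  by_contra! hne
  exact hm ((h.2.2.2 k hk).2.1 m hne.1 hne.2 x hx)

theorem strictAntiOn (h : IsPseudoTriangular hn g t)
    (hcont : ∀ m, ContinuousOn (g m) (Icc 0 1)) (k : Fin n) (hk : (k : ℕ) + 1 < n) :
    StrictAntiOn (g k) (Icc (t k) (t ⟨(k : ℕ) + 1, hk⟩)) := by
  obtain ⟨⟨h₁, h₀⟩, -, -, hbij, -⟩ := h.2.2.2 k hk
  refine ContinuousOn.strictAntiOn_of_injOn_Icc (h.1 (fin_lt_mk_add_one k hk)).le
    (by rw [h₁, h₀]; exact zero_le_one) ((hcont k).mono ?_) hbij.injOn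
  exact Icc_subset_Icc (h.mem_Icc k).1 (h.mem_Icc _).2

theorem strictMonoOn (h : IsPseudoTriangular hn g t)
    (hcont : ∀ m, ContinuousOn (g m) (Icc 0 1)) (k : Fin n) (hk : (k : ℕ) + 1 < n) :
    StrictMonoOn (g ⟨(k : ℕ) + 1, hk⟩) (Icc (t k) (t ⟨(k : ℕ) + 1, hk⟩)) := by
  intro u hu v hv huv
  have hcompl := (h.2.2.2 k hk).2.2.1
  rw [hcompl u hu, hcompl v hv]
  linarith [h.strictAntiOn hcont k hk hu hv huv]

theorem apply_self (h : IsPseudoTriangular hn g t) (m : Fin n) : g m (t m) = 1 := by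
  by_cases hm : (m : ℕ) + 1 < n
  · exact (h.2.2.2 m hm).1.1
  obtain ⟨k, hk, rfl⟩ :
      ∃ k : Fin n, ∃ hk : (k : ℕ) + 1 < n, (⟨(k : ℕ) + 1, hk⟩ : Fin n) = m :=
    ⟨⟨m - 1, by omega⟩, by simp only; omega, Fin.ext (by simp only; omega)⟩
  obtain ⟨⟨-, h₀⟩, -, hcompl, -⟩ := h.2.2.2 k hk
  rw [hcompl _ (right_mem_Icc.2 (h.1 (fin_lt_mk_add_one k hk)).le), h₀, sub_zero]

theorem isStrictlyUnimodalOnSupport (h : IsPseudoTriangular hn g t)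
    (hcont : ∀ m, ContinuousOn (g m) (Icc 0 1)) (m : Fin n) :
    IsStrictlyUnimodalOnSupport (g m) (t m) := by
  constructor
  · intro x hx y hxy hym hpos
    obtain ⟨k, hk, hxk⟩ := h.exists_mem_step hx
    rcases h.eq_or_eq_of_ne_zero hxk hpos.ne' with rfl | rfl
    · linarith [hxk.1]
    · exact h.strictMonoOn hcont k hk hxk ⟨hxk.1.trans hxy.le, hym⟩ hxy
  · intro y hy x hmx hxy hpos
    obtain ⟨k, hk, hyk⟩ := h.exists_mem_step hy
    rcases h.eq_or_eq_of_ne_zero hyk hpos.ne' with rfl | rfl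
    · exact h.strictAntiOn hcont m hk ⟨hmx, hxy.le.trans hyk.2⟩ hyk hxy
    · linarith [hyk.2]

theorem isRuspini (h : IsPseudoTriangular hn g t) : IsRuspini g := by
  intro x hx
  obtain ⟨k, hk, hxk⟩ := h.exists_mem_step hx
  obtain ⟨-, hzero, hcompl, -⟩ := h.2.2.2 k hk
  rw [Finset.sum_eq_add_of_mem k ⟨(k : ℕ) + 1, hk⟩ (Finset.mem_univ _) (Finset.mem_univ _)
    (fin_lt_mk_add_one k hk).ne fun j _ hj => hzero j hj.1 hj.2 x hxk, hcompl x hxk]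
  ring

theorem isTwoOverlapping (h : IsPseudoTriangular hn g t)
    (hnn : ∀ m, ∀ x ∈ Icc (0:ℝ) 1, 0 ≤ g m x) : IsTwoOverlapping g :=
  isTwoOverlapping_of_forall_exists_pair hnn fun _ hx => by
    obtain ⟨k, hk, hxk⟩ := h.exists_mem_step hx
    exact ⟨k, ⟨(k : ℕ) + 1, hk⟩, fun m hm => h.eq_or_eq_of_ne_zero hxk hm⟩

end IsPseudoTriangular

section Peaks

variable {ι : Type*} [Fintype ι] {f : ι → ℝ → ℝ} {t : ι → ℝ}

theorem eq_zero_of_peak_mem_uIcc (hmap : ∀ i, MapsTo (f i) (Icc 0 1) (Icc 0 1))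
    (hsum : IsRuspini f) (hconv : ∀ i, IsMinConvex (f i))
    (hpeak : ∀ i, t i ∈ Icc (0:ℝ) 1 ∧ f i (t i) = 1) {i j : ι} (hji : j ≠ i) {x : ℝ}
    (hx : x ∈ Icc (0:ℝ) 1) (h : t i ∈ uIcc x (t j)) : f j x = 0 := by
  have hnn : ∀ i, ∀ x ∈ Icc (0:ℝ) 1, 0 ≤ f i x := fun i _ hx => (hmap i hx).1
  have hle := (hconv j).min_le hx (hpeak j).1 h
  rw [(hpeak j).2, hsum.eq_zero_of_eq_one hnn (hpeak i).1 (hpeak i).2 hji, min_le_iff] at hle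
  exact le_antisymm (hle.resolve_right (by norm_num)) (hnn j x hx)

theorem peak_eq_of_forall_mem_uIcc (hmap : ∀ i, MapsTo (f i) (Icc 0 1) (Icc 0 1))
    (hsum : IsRuspini f) (hnorm : ∀ i, IsStronglyNormal (f i))
    (hconv : ∀ i, IsMinConvex (f i)) (hpeak : ∀ i, t i ∈ Icc (0:ℝ) 1 ∧ f i (t i) = 1)
    {i : ι} {x : ℝ} (hx : x ∈ Icc (0:ℝ) 1) (h : ∀ j, j ≠ i → t i ∈ uIcc x (t j)) :
    t i = x :=
  (hnorm i).unique (hpeak i) ⟨hx, hsum.eq_one_of_forall_ne_eq_zero hx fun j hj =>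
    eq_zero_of_peak_mem_uIcc hmap hsum hconv hpeak hj hx (h j hj)⟩

end Peaks

theorem exists_perm_strictMono_peaks {n : ℕ} {f : Fin n → ℝ → ℝ}
    (hmap : ∀ i, MapsTo (f i) (Icc 0 1) (Icc 0 1)) (hsum : IsRuspini f)
    (hnorm : ∀ i, IsStronglyNormal (f i)) :
    ∃ σ : Equiv.Perm (Fin n), ∃ t : Fin n → ℝ,
      StrictMono t ∧ ∀ m, t m ∈ Icc (0:ℝ) 1 ∧ f (σ m) (t m) = 1 := by
  choose p hp using fun i => (hnorm i).exists
  have hinj : Function.Injective p := fun i j hij => by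
    by_contra hne
    have h0 := hsum.eq_zero_of_eq_one (fun i _ hx => (hmap i hx).1) (hp i).1 (hp i).2
      (Ne.symm hne)
    rw [hij, (hp j).2] at h0
    exact one_ne_zero h0
  exact ⟨Tuple.sort p, p ∘ Tuple.sort p,
    (Tuple.monotone_sort p).strictMono_of_injective (hinj.comp (Tuple.sort p).injective),
    fun m => hp _⟩

theorem strictAntiOn_of_peak {g : ℝ → ℝ} {a b : ℝ} (hsconv : IsStrictMinConvexOnSupport g)
    (hsub : Icc a b ⊆ Icc 0 1) (ha : g a = 1) (hb : g b = 0)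
    (hlt : ∀ x ∈ Icc a b, x ≠ a → g x < 1) (hpos : ∀ x ∈ Icc a b, x ≠ b → 0 < g x) :
    StrictAntiOn g (Icc a b) := by
  intro u hu v hv huv
  rcases hv.2.eq_or_lt with rfl | hvb
  · exact hb ▸ hpos u hu huv.ne
  rcases hu.1.eq_or_lt with rfl | hau
  · exact ha ▸ hlt v hv huv.ne'
  have hsupp : Icc a v ⊆ {z | z ∈ Icc (0:ℝ) 1 ∧ 0 < g z} := fun z hz =>
    have hz' : z ∈ Icc a b := ⟨hz.1, hz.2.trans hv.2⟩
    ⟨hsub hz', hpos z hz' (hz.2.trans_lt hvb).ne⟩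
  have := hsconv.min_lt hsupp ⟨hau, huv⟩
  rwa [ha, min_eq_right (hlt v hv (hau.trans huv).ne').le] at this

theorem bijOn_Icc_of_injOn {g : ℝ → ℝ} {a b : ℝ} {s : Set ℝ} (hab : a ≤ b)
    (hg : ContinuousOn g (Icc a b)) (hinj : InjOn g (Icc a b)) (hmaps : MapsTo g (Icc a b) s)
    (hs : uIcc (g a) (g b) = s) : BijOn g (Icc a b) s := by
  refine ⟨hmaps, hinj, ?_⟩
  rw [← hs, ← uIcc_of_le hab]
  exact intermediate_value_uIcc (uIcc_of_le hab ▸ hg)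

section SortedPeaks

variable {n : ℕ} {g : Fin n → ℝ → ℝ} {t : Fin n → ℝ}

theorem eq_zero_of_mem_Icc_of_ne (hmap : ∀ m, MapsTo (g m) (Icc 0 1) (Icc 0 1))
    (hsum : IsRuspini g) (hconv : ∀ m, IsMinConvex (g m)) (ht : StrictMono t)
    (hpeak : ∀ m, t m ∈ Icc (0:ℝ) 1 ∧ g m (t m) = 1) {i : Fin n} (hi : (i : ℕ) + 1 < n)
    {j : Fin n} (hji : j ≠ i) (hji' : j ≠ ⟨(i : ℕ) + 1, hi⟩) {x : ℝ}
    (hx : x ∈ Icc (t i) (t ⟨(i : ℕ) + 1, hi⟩)) : g j x = 0 := by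
  have hx₀₁ : x ∈ Icc (0:ℝ) 1 := ⟨(hpeak i).1.1.trans hx.1, hx.2.trans (hpeak _).1.2⟩
  rcases hji.lt_or_gt with hlt | hgt
  · exact eq_zero_of_peak_mem_uIcc hmap hsum hconv hpeak hji hx₀₁
      (mem_uIcc.2 (Or.inr ⟨(ht hlt).le, hx.1⟩))
  · have hgt' : (⟨(i : ℕ) + 1, hi⟩ : Fin n) < j := by
      rw [Fin.lt_def] at hgt ⊢
      have := Fin.val_ne_of_ne hji'
      simp only at this ⊢
      omega
    exact eq_zero_of_peak_mem_uIcc hmap hsum hconv hpeak hji' hx₀₁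
      (mem_uIcc.2 (Or.inl ⟨hx.2, (ht hgt').le⟩))

theorem isPseudoTriangular_of_peaks (hn : 2 ≤ n) (hcont : ∀ m, ContinuousOn (g m) (Icc 0 1))
    (hmap : ∀ m, MapsTo (g m) (Icc 0 1) (Icc 0 1)) (hsum : IsRuspini g)
    (hnorm : ∀ m, IsStronglyNormal (g m)) (hconv : ∀ m, IsMinConvex (g m))
    (hsconv : ∀ m, IsStrictMinConvexOnSupport (g m)) (ht : StrictMono t)
    (hpeak : ∀ m, t m ∈ Icc (0:ℝ) 1 ∧ g m (t m) = 1) : IsPseudoTriangular hn g t := by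
  have hzero : ∀ i j, j ≠ i → g j (t i) = 0 := fun i _ hji =>
    hsum.eq_zero_of_eq_one (fun m _ hx => (hmap m hx).1) (hpeak i).1 (hpeak i).2 hji
  have hlt : ∀ m, ∀ x ∈ Icc (0:ℝ) 1, x ≠ t m → g m x < 1 := fun m x hx hxm =>
    (hmap m hx).2.lt_of_ne fun h => hxm ((hnorm m).unique ⟨hx, h⟩ (hpeak m))
  refine ⟨ht, peak_eq_of_forall_mem_uIcc hmap hsum hnorm hconv hpeak ⟨le_rfl, zero_le_one⟩
      fun j _ => mem_uIcc.2 (Or.inl ⟨(hpeak _).1.1, ht.monotone (Fin.le_def.2 j.val.zero_le)⟩),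
    peak_eq_of_forall_mem_uIcc hmap hsum hnorm hconv hpeak ⟨zero_le_one, le_rfl⟩
      fun j _ => mem_uIcc.2 (Or.inr ⟨ht.monotone (Fin.le_def.2 (Nat.le_sub_one_of_lt j.isLt)),
        (hpeak _).1.2⟩), fun i hi => ?_⟩
  set i' : Fin n := ⟨(i : ℕ) + 1, hi⟩
  have hii' : i < i' := fin_lt_mk_add_one i hi
  have hsub : Icc (t i) (t i') ⊆ Icc 0 1 := Icc_subset_Icc (hpeak i).1.1 (hpeak i').1.2
  have hothers : ∀ j, j ≠ i → j ≠ i' → ∀ x ∈ Icc (t i) (t i'), g j x = 0 :=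
    fun j hji hji' x hx => eq_zero_of_mem_Icc_of_ne hmap hsum hconv ht hpeak hi hji hji' hx
  have hcompl : ∀ x ∈ Icc (t i) (t i'), g i' x = 1 - g i x := fun x hx => by
    rw [← hsum x (hsub hx), Finset.sum_eq_add_of_mem i i' (Finset.mem_univ _)
      (Finset.mem_univ _) hii'.ne fun j _ hj => hothers j hj.1 hj.2 x hx]
    ring
  have hanti : StrictAntiOn (g i) (Icc (t i) (t i')) :=
    strictAntiOn_of_peak (hsconv i) hsub (hpeak i).2 (hzero i' i hii'.ne)
      (fun x hx hxi => hlt i x (hsub hx) hxi)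
      (fun x hx hxi' => by linarith [hcompl x hx, hlt i' x (hsub hx) hxi'])
  refine ⟨⟨(hpeak i).2, hzero i' i hii'.ne⟩, hothers, hcompl,
    bijOn_Icc_of_injOn (ht hii').le ((hcont i).mono hsub) hanti.injOn ((hmap i).mono_left hsub)
      (by rw [(hpeak i).2, hzero i' i hii'.ne, uIcc_of_ge zero_le_one]),
    bijOn_Icc_of_injOn (ht hii').le ((hcont i').mono hsub)
      (fun u hu v hv huv => hanti.injOn hu hv (by linarith [hcompl u hu, hcompl v hv]))
      ((hmap i').mono_left hsub)
      (by rw [(hpeak i').2, hzero i i' hii'.ne', uIcc_of_le zero_le_one])⟩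

end SortedPeaks

/-- Theorem I, (i) ⇔ (ii): `P = {f_1,…,f_n}` is a pseudo-triangular basis iff it
is a 2-overlapping Ruspini partition in which each `f i` is strongly normal,
min-convex, and strictly min-convex on its support. -/
theorem stmt11 (n : ℕ) (hn : 2 ≤ n) (f : Fin n → ℝ → ℝ)
    (hcont : ∀ i, ContinuousOn (f i) (Set.Icc 0 1))
    (hmap : ∀ i, Set.MapsTo (f i) (Set.Icc 0 1) (Set.Icc 0 1)) :
    (∃ σ : Equiv.Perm (Fin n), ∃ t : Fin n → ℝ,
      StrictMono t ∧ t ⟨0, by omega⟩ = 0 ∧ t ⟨n - 1, by omega⟩ = 1 ∧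
      ∀ i : Fin n, ∀ hi : (i : ℕ) + 1 < n,
        (f (σ i) (t i) = 1 ∧ f (σ i) (t ⟨(i : ℕ) + 1, hi⟩) = 0) ∧
        (∀ j : Fin n, j ≠ i → j ≠ ⟨(i : ℕ) + 1, hi⟩ →
          ∀ x ∈ Set.Icc (t i) (t ⟨(i : ℕ) + 1, hi⟩), f (σ j) x = 0) ∧
        (∀ x ∈ Set.Icc (t i) (t ⟨(i : ℕ) + 1, hi⟩),
          f (σ ⟨(i : ℕ) + 1, hi⟩) x = 1 - f (σ i) x) ∧
        (Set.BijOn (f (σ i)) (Set.Icc (t i) (t ⟨(i : ℕ) + 1, hi⟩)) (Set.Icc 0 1) ∧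
         Set.BijOn (f (σ ⟨(i : ℕ) + 1, hi⟩))
           (Set.Icc (t i) (t ⟨(i : ℕ) + 1, hi⟩)) (Set.Icc 0 1))) ↔
    ((∀ x ∈ Set.Icc (0:ℝ) 1, ∑ i : Fin n, f i x = 1) ∧
     (∀ x ∈ Set.Icc (0:ℝ) 1, ∀ i₁ i₂ i₃ : Fin n,
       i₁ ≠ i₂ → i₁ ≠ i₃ → i₂ ≠ i₃ →
       min (f i₁ x) (min (f i₂ x) (f i₃ x)) = 0) ∧
     (∀ i : Fin n, ∃! x, x ∈ Set.Icc (0:ℝ) 1 ∧ f i x = 1) ∧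
     (∀ i : Fin n, ∀ x ∈ Set.Icc (0:ℝ) 1, ∀ y ∈ Set.Icc (0:ℝ) 1,
       ∀ l ∈ Set.Icc (0:ℝ) 1, min (f i x) (f i y) ≤ f i (l * x + (1 - l) * y)) ∧
     (∀ i : Fin n, ∀ x y : ℝ, x < y →
       Set.Icc x y ⊆ {z | z ∈ Set.Icc (0:ℝ) 1 ∧ 0 < f i z} →
       ∀ l : ℝ, 0 < l → l < 1 →
         min (f i x) (f i y) < f i (l * x + (1 - l) * y))) := by
  constructor
  · rintro ⟨σ, t, h⟩
    have h : IsPseudoTriangular hn (f ∘ σ) t := h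
    have hnn : ∀ m, ∀ x ∈ Icc (0:ℝ) 1, 0 ≤ (f ∘ σ) m x := fun m _ hx => (hmap (σ m) hx).1
    have hunimodal := h.isStrictlyUnimodalOnSupport fun m => hcont (σ m)
    exact ⟨(isRuspini_comp_perm f σ).1 h.isRuspini, (h.isTwoOverlapping hnn).of_comp_perm,
      σ.forall_congr_right.1 fun m => (hunimodal m).isStronglyNormal (h.mem_Icc m) (h.apply_self m),
      σ.forall_congr_right.1 fun m => (hunimodal m).isMinConvex (hnn m),
      σ.forall_congr_right.1 fun m => (hunimodal m).isStrictMinConvexOnSupport⟩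
  · rintro ⟨hsum, -, hnorm, hconv, hsconv⟩
    obtain ⟨σ, t, ht, hpeak⟩ := exists_perm_strictMono_peaks hmap hsum hnorm
    exact ⟨σ, t, isPseudoTriangular_of_peaks hn (fun m => hcont (σ m)) (fun m => hmap (σ m))
      ((isRuspini_comp_perm f σ).2 hsum) (fun m => hnorm (σ m)) (fun m => hconv (σ m))
      (fun m => hsconv (σ m)) ht hpeak⟩
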